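/- Assume the tentative-update setting with x⁺ ≠ x, and additionally that f : ℝⁿ → ℝ is convex and differentiable with an L-Lipschitz gradient (L > 0), l(y) ≤ f(y) for all y ∈ ℝⁿ, and l(x) = f(x). Let α ∈ (0,1) and let t ∈ (0,1] satisfy t ≤ (1 − α)λ / (2L). Then f(x + t v) + t g(x⁺) + (1 − t) g(x) ≤ f(x) + g(x) − (α t / 2)⟨v, (H + λI)v⟩; i.e., the Armijo line-search condition holds at step size t. -/

import Mathlib

open scoped RealInnerProductSpace

/-!
Because `l` is a convex minorant of `f` touching it at `x`, `∇f(x)` is a subgradient of `l` at `x`.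
Testing the optimality of `x⁺` against `y = x` then gives
`⟪∇f(x), v⟫ + g(x⁺) - g(x) ≤ -½⟪v, (H + λI)v⟫`. Convexity of `f` and the Lipschitz gradient give
`f(x + tv) ≤ f(x) + t⟪∇f(x), v⟫ + L t²‖v‖²`, and since `λ‖v‖² ≤ ⟪v, (H + λI)v⟫` the condition
`2Lt ≤ (1 - α)λ` lets the quadratic term eat only a `1 - α` fraction of the decrease.
-/

open Set Filter Topology

theorem ConvexOn.le_slope_of_le_of_hasDerivAt {φ ψ : ℝ → ℝ} {a b d : ℝ}
    (hφ : ConvexOn ℝ univ φ) (hle : ∀ s, φ s ≤ ψ s) (ha : φ a = ψ a)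
    (hψ : HasDerivAt ψ d a) (hab : a < b) :
    d ≤ slope φ a b := by
  have hlim : Tendsto (slope ψ a) (𝓝[<] a) (𝓝 d) :=
    (hasDerivWithinAt_iff_tendsto_slope' self_notMem_Iio).mp hψ.hasDerivWithinAt
  refine le_of_tendsto hlim (eventually_nhdsWithin_of_forall fun s (hs : s < a) => ?_)
  calc slope ψ a s ≤ slope φ a s := by
        rw [slope_def_field, slope_def_field, ha]
        exact div_le_div_of_nonpos_of_le (by linarith) (by linarith [hle s])
    _ ≤ slope φ a b :=
        hφ.slope_mono (mem_univ a) ⟨mem_univ s, hs.ne⟩ ⟨mem_univ b, hab.ne'⟩ (hs.trans hab).le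

section Gradient

variable {E : Type*} [NormedAddCommGroup E] [InnerProductSpace ℝ E] [CompleteSpace E]

theorem ConvexOn.inner_gradient_le_sub_of_le {l f : E → ℝ} {x : E}
    (hl : ConvexOn ℝ univ l) (hle : ∀ y, l y ≤ f y) (hx : l x = f x)
    (hf : DifferentiableAt ℝ f x) (y : E) :
    ⟪gradient f x, y - x⟫ ≤ l y - l x := by
  have hline : ∀ s : ℝ, AffineMap.lineMap (k := ℝ) x y s = x + s • (y - x) := fun s => by
    rw [AffineMap.lineMap_apply_module]; module
  have hφ : ConvexOn ℝ univ (l ∘ AffineMap.lineMap (k := ℝ) x y) := by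
    simpa using hl.comp_affineMap (AffineMap.lineMap (k := ℝ) x y)
  have hψ : HasDerivAt (f ∘ AffineMap.lineMap (k := ℝ) x y) ⟪gradient f x, y - x⟫ 0 := by
    have hpath : HasDerivAt (fun s : ℝ => x + s • (y - x)) (y - x) 0 := by
      simpa using ((hasDerivAt_id (0 : ℝ)).smul_const (y - x)).const_add x
    have hgrad : HasFDerivAt f (InnerProductSpace.toDual ℝ E (gradient f x))
        (x + (0 : ℝ) • (y - x)) := by
      simpa using hf.hasGradientAt.hasFDerivAt
    simpa [Function.comp_def, hline] using hgrad.comp_hasDerivAt 0 hpath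
  simpa [slope_def_field] using
    hφ.le_slope_of_le_of_hasDerivAt (fun s => hle _) (by simpa using hx) hψ zero_lt_one

-- Only the gradient inequality at `b` is used, hence the constant `L` rather than `L / 2`.
theorem ConvexOn.le_add_inner_gradient_add_mul_norm_sq {f : E → ℝ} {a b : E} {L : ℝ}
    (hf : ConvexOn ℝ univ f) (hb : DifferentiableAt ℝ f b)
    (hLip : ‖gradient f b - gradient f a‖ ≤ L * ‖b - a‖) :
    f b ≤ f a + ⟪gradient f a, b - a⟫ + L * ‖b - a‖ ^ 2 := by
  have hsupport := hf.inner_gradient_le_sub_of_le (fun _ => le_rfl) rfl hb a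
  have hcross : ⟪gradient f b - gradient f a, b - a⟫ ≤ L * ‖b - a‖ ^ 2 :=
    calc ⟪gradient f b - gradient f a, b - a⟫ ≤ ‖gradient f b - gradient f a‖ * ‖b - a‖ :=
          real_inner_le_norm _ _
      _ ≤ L * ‖b - a‖ * ‖b - a‖ := by gcongr
      _ = L * ‖b - a‖ ^ 2 := by ring
  rw [← neg_sub b a, inner_neg_right] at hsupport
  rw [inner_sub_left] at hcross
  linarith

end Gradient

theorem Matrix.inner_toEuclideanLin_add_smul_one {n : Type*} [Fintype n] [DecidableEq n]
    (H : Matrix n n ℝ) (c : ℝ) (z : EuclideanSpace ℝ n) :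
    ⟪z, Matrix.toEuclideanLin (H + c • 1) z⟫ = ⟪z, Matrix.toEuclideanLin H z⟫ + c * ‖z‖ ^ 2 := by
  have hone : Matrix.toEuclideanLin (1 : Matrix n n ℝ) z = z := by simp
  rw [map_add, map_smul, LinearMap.add_apply, LinearMap.smul_apply, hone, inner_add_right,
    real_inner_smul_right, real_inner_self_eq_norm_sq]

theorem stmt_10_general (n : ℕ)
    (l g f : EuclideanSpace ℝ (Fin n) → ℝ)
    (hl : ConvexOn ℝ Set.univ l)
    (H : Matrix (Fin n) (Fin n) ℝ)
    (hH : ∀ z : EuclideanSpace ℝ (Fin n), 0 ≤ ⟪z, Matrix.toEuclideanLin H z⟫)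
    (lam : ℝ)
    (x xp : EuclideanSpace ℝ (Fin n))
    (hmin : ∀ y,
      l xp + g xp + (1/2) * ⟪xp - x, Matrix.toEuclideanLin (H + lam • 1) (xp - x)⟫ ≤
      l y + g y + (1/2) * ⟪y - x, Matrix.toEuclideanLin (H + lam • 1) (y - x)⟫)
    (hf : ConvexOn ℝ Set.univ f) (hfd : Differentiable ℝ f)
    (L : ℝ) (hL : 0 < L)
    (hLip : ∀ y z, ‖gradient f y - gradient f z‖ ≤ L * ‖y - z‖)
    (hle : ∀ y, l y ≤ f y) (htight : l x = f x)
    (α : ℝ) (hα : α ∈ Set.Ioo (0:ℝ) 1)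
    (t : ℝ) (ht : t ∈ Set.Ioc (0:ℝ) 1) (htle : t ≤ (1 - α) * lam / (2 * L)) :
    f (x + t • (xp - x)) + t * g xp + (1 - t) * g x ≤
      f x + g x - (α * t / 2) * ⟪xp - x, Matrix.toEuclideanLin (H + lam • 1) (xp - x)⟫ := by
  set v := xp - x
  set q := ⟪v, Matrix.toEuclideanLin (H + lam • 1) v⟫
  have hsub : ⟪gradient f x, v⟫ ≤ l xp - f x := by
    rw [← htight]
    exact hl.inner_gradient_le_sub_of_le hle htight (hfd x) xp
  have hprox : l xp + g xp + q / 2 ≤ f x + g x := by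
    simpa [htight, div_eq_inv_mul] using hmin x
  have hq : lam * ‖v‖ ^ 2 ≤ q := by
    linarith [H.inner_toEuclideanLin_add_smul_one lam v, hH v]
  have hdesc : f (x + t • v) ≤ f x + t * ⟪gradient f x, v⟫ + L * t ^ 2 * ‖v‖ ^ 2 := by
    have h := hf.le_add_inner_gradient_add_mul_norm_sq (hfd _) (hLip (x + t • v) x)
    rwa [add_sub_cancel_left, inner_smul_right, norm_smul, mul_pow, Real.norm_eq_abs, sq_abs,
      ← mul_assoc] at h
  have hstep : 2 * L * t ≤ (1 - α) * lam := by
    rwa [le_div_iff₀ (by positivity), mul_comm] at htle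
  obtain ⟨ht0, -⟩ := ht
  obtain ⟨-, hα1⟩ := hα
  have hcurv : L * t * ‖v‖ ^ 2 ≤ (1 - α) * q / 2 := by
    nlinarith [sq_nonneg ‖v‖, mul_le_mul_of_nonneg_left hq (sub_nonneg.mpr hα1.le)]
  nlinarith [mul_le_mul_of_nonneg_left hcurv ht0.le]

/-- Tentative-update setting with `x⁺ ≠ x`, `l` a convex minorant of the convex
differentiable `f` tight at `x`, with `∇f` L-Lipschitz: any step size
`t ∈ (0,1]` with `t ≤ (1 − α)λ/(2L)` satisfies the Armijo line-search condition. -/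
theorem stmt_10 (n : ℕ)
    (l g f : EuclideanSpace ℝ (Fin n) → ℝ)
    (hl : ConvexOn ℝ Set.univ l) (hg : ConvexOn ℝ Set.univ g)
    (H : Matrix (Fin n) (Fin n) ℝ)
    (hH : ∀ z : EuclideanSpace ℝ (Fin n), 0 ≤ ⟪z, Matrix.toEuclideanLin H z⟫)
    (lam : ℝ) (hlam : 0 < lam)
    (x xp : EuclideanSpace ℝ (Fin n))
    (hmin : ∀ y,
      l xp + g xp + (1/2) * ⟪xp - x, Matrix.toEuclideanLin (H + lam • 1) (xp - x)⟫ ≤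
      l y + g y + (1/2) * ⟪y - x, Matrix.toEuclideanLin (H + lam • 1) (y - x)⟫)
    (hne : xp ≠ x)
    (hf : ConvexOn ℝ Set.univ f) (hfd : Differentiable ℝ f)
    (L : ℝ) (hL : 0 < L)
    (hLip : ∀ y z, ‖gradient f y - gradient f z‖ ≤ L * ‖y - z‖)
    (hle : ∀ y, l y ≤ f y) (htight : l x = f x)
    (α : ℝ) (hα : α ∈ Set.Ioo (0:ℝ) 1)
    (t : ℝ) (ht : t ∈ Set.Ioc (0:ℝ) 1) (htle : t ≤ (1 - α) * lam / (2 * L)) :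
    f (x + t • (xp - x)) + t * g xp + (1 - t) * g x ≤
      f x + g x - (α * t / 2) * ⟪xp - x, Matrix.toEuclideanLin (H + lam • 1) (xp - x)⟫ :=
  stmt_10_general n l g f hl H hH lam x xp hmin hf hfd L hL hLip hle htight α hα t ht htle
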